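/- For every natural number r there exists a natural number N such that for all natural numbers g and k with g ≥ N, k ≥ 1 and 10·k ≤ g + 15, one has ((g−1)/2 − k + 2)^(g−r) > g! (as real numbers), where the base (g−1)/2 − k + 2 is a positive real number under these hypotheses. -/

import Mathlib

open Real Filter Topology Nat

/-!
Stirling's bound `n ! ≤ e √n (n / e) ^ n` shows that `n !` is eventually smaller than
`(c n) ^ (n - r)` as soon as `c e > 1`: the quotient is at most `e c ^ r n ^ (r + 1) (c e)⁻¹ ^ n`,
and the geometric factor beats the polynomial one. Under `10 k ≤ g + 15` the base is at least
`2 g / 5`, and `2 e / 5 > 1` since `e > 2.5`.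
-/

theorem factorial_le_exp_one_mul_sqrt_mul_div_exp_one_pow {n : ℕ} (hn : n ≠ 0) :
    (n ! : ℝ) ≤ exp 1 * √n * (n / exp 1) ^ n := by
  obtain ⟨m, rfl⟩ := Nat.exists_eq_succ_of_ne_zero hn
  have h : Stirling.stirlingSeq (m + 1) ≤ exp 1 / √2 :=
    Stirling.stirlingSeq_one ▸ Stirling.stirlingSeq'_antitone (Nat.zero_le m)
  rw [Stirling.stirlingSeq, div_le_iff₀ (by positivity)] at h
  calc _ ≤ _ := h
    _ = _ := by rw [Real.sqrt_mul' _ (by positivity)]; field_simp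

theorem eventually_factorial_lt_mul_pow_sub {c : ℝ} (hc : 1 < c * exp 1) (r : ℕ) :
    ∀ᶠ n : ℕ in atTop, (n ! : ℝ) < (c * n) ^ (n - r) := by
  have hc0 : 0 < c := pos_of_mul_pos_left (one_pos.trans hc) (exp_pos 1).le
  set q := (c * exp 1)⁻¹ with hq
  have hsmall : Tendsto (fun n : ℕ ↦ exp 1 * c ^ r * ((n : ℝ) ^ (r + 1) * q ^ n)) atTop (𝓝 0) := by
    simpa only [mul_zero] using (tendsto_pow_const_mul_const_pow_of_lt_one (r + 1)
      (by positivity) (inv_lt_one_of_one_lt₀ hc)).const_mul (exp 1 * c ^ r)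
  filter_upwards [hsmall.eventually_lt_const one_pos, eventually_ge_atTop (r + 1)] with n hlt hrn
  have hn : (1 : ℝ) ≤ n := by exact_mod_cast (r.succ_pos.trans_le hrn)
  have hsplit : (c * n) ^ (n - r) * (c * n) ^ r = (c * n) ^ n := by
    rw [← pow_add, Nat.sub_add_cancel (by omega)]
  have hdiv : ((n : ℝ) / exp 1) ^ n = q ^ n * (c * n) ^ n := by
    rw [← mul_pow, hq]; congr 1; field_simp
  refine lt_of_mul_lt_mul_right ?_ (pow_pos (by positivity : 0 < c * n) r).le
  calc (n ! : ℝ) * (c * n) ^ r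
      ≤ exp 1 * √n * (n / exp 1) ^ n * (c * n) ^ r := by
        gcongr; exact factorial_le_exp_one_mul_sqrt_mul_div_exp_one_pow (by omega)
    _ ≤ exp 1 * n * (n / exp 1) ^ n * (c * n) ^ r := by
        gcongr; exact Real.sqrt_le_self_iff.2 (Or.inr hn)
    _ = exp 1 * c ^ r * (n ^ (r + 1) * q ^ n) * (c * n) ^ n := by
        rw [hdiv]; ring
    _ < 1 * (c * n) ^ n := by gcongr
    _ = (c * n) ^ (n - r) * (c * n) ^ r := by rw [one_mul, hsplit]

theorem stmt_8 (r : ℕ) :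
    ∃ N : ℕ, ∀ g k : ℕ, g ≥ N → 1 ≤ k → 10 * k ≤ g + 15 →
      (((g : ℝ) - 1) / 2 - (k : ℝ) + 2) ^ (g - r) > (Nat.factorial g : ℝ) := by
  have hc : 1 < 2 / 5 * exp 1 := by linarith [exp_one_gt_d9]
  obtain ⟨N, hN⟩ := eventually_atTop.1 (eventually_factorial_lt_mul_pow_sub hc r)
  refine ⟨N, fun g k hg _ hk => ?_⟩
  have hbase : 2 / 5 * (g : ℝ) ≤ ((g : ℝ) - 1) / 2 - k + 2 := by
    have : (10 * k : ℝ) ≤ g + 15 := by exact_mod_cast hk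
    linarith
  calc (g ! : ℝ) < (2 / 5 * g) ^ (g - r) := hN g hg
    _ ≤ _ := by gcongr
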